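/- arXiv:1801.02421 — 6 statements merged into one kernel-verified Lean document; each statement's English description precedes it below -/
import Mathlib

section
/- Let λ and μ be partitions of the same integer n, each with at most N parts (padded with zeros to length N), with μ strictly smaller than λ in the dominance order. Define ε^{(2)}_λ(α) = e₂(αλ₁, αλ₂−1, …, αλ_N+1−N), where e₂ is the second elementary symmetric polynomial. Then ε^{(2)}_λ(α) and ε^{(2)}_μ(α) are distinct polynomials in α. -/
open Polynomial Finset

/-- The entry `α λ_i + 1 − i` (with `i` 1-indexed, i.e. `α λ_i − i` for 0-indexed `i : Fin N`)
as a polynomial in `α` over `ℚ`. -/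
noncomputable def epsEntry {N : ℕ} (l : Fin N → ℕ) (i : Fin N) : Polynomial ℚ :=
  C (l i : ℚ) * X - C ((i : ℕ) : ℚ)

/-- `ε^{(2)}_λ(α) = e₂(αλ₁, αλ₂−1, …, αλ_N+1−N)` as a polynomial in `α`. -/
noncomputable def eps2 {N : ℕ} (l : Fin N → ℕ) : Polynomial ℚ :=
  ∑ i : Fin N, ∑ j : Fin N, if i < j then epsEntry l i * epsEntry l j else 0

lemma epsEntry_mul_coeff_one {N : ℕ} (l : Fin N → ℕ) (i j : Fin N) :
    (epsEntry l i * epsEntry l j).coeff 1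
      = -((l i : ℚ) * ((j : ℕ) : ℚ) + (l j : ℚ) * ((i : ℕ) : ℚ)) := by
  have h : epsEntry l i * epsEntry l j
      = C ((l i : ℚ) * (l j : ℚ)) * X ^ 2
        - C ((l i : ℚ) * ((j : ℕ) : ℚ) + (l j : ℚ) * ((i : ℕ) : ℚ)) * X
        + C (((i : ℕ) : ℚ) * ((j : ℕ) : ℚ)) := by
    simp only [epsEntry, C_mul, C_add]; ring
  rw [h]
  simp only [coeff_add, coeff_sub, coeff_C_mul, coeff_X_pow, coeff_X, coeff_C]
  norm_num

/-- Coefficient of `X` in `eps2 l`. -/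
lemma eps2_coeff_one {N : ℕ} (l : Fin N → ℕ) :
    (eps2 l).coeff 1
      = (∑ i : Fin N, ((i : ℕ) : ℚ) * (l i : ℚ))
        - (∑ i : Fin N, (l i : ℚ)) * (∑ i : Fin N, ((i : ℕ) : ℚ)) := by
  have key : (eps2 l).coeff 1
      = ∑ i : Fin N, ∑ j : Fin N,
          (if i < j then -((l i : ℚ) * ((j : ℕ) : ℚ) + (l j : ℚ) * ((i : ℕ) : ℚ)) else 0) := by
    rw [eps2, finset_sum_coeff]
    refine Finset.sum_congr rfl fun i _ => ?_
    rw [finset_sum_coeff]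
    refine Finset.sum_congr rfl fun j _ => ?_
    split
    · exact epsEntry_mul_coeff_one l i j
    · simp
  rw [key]
  have split1 : ∀ i j : Fin N,
      (if i < j then -((l i : ℚ) * ((j : ℕ) : ℚ) + (l j : ℚ) * ((i : ℕ) : ℚ)) else 0)
      = -((if i < j then (l i : ℚ) * ((j : ℕ) : ℚ) else 0)
          + (if i < j then (l j : ℚ) * ((i : ℕ) : ℚ) else 0)) := by
    intro i j; split <;> simp
  simp only [split1, Finset.sum_neg_distrib, Finset.sum_add_distrib]
  have hswap : (∑ i : Fin N, ∑ j : Fin N, (if i < j then (l j : ℚ) * ((i : ℕ) : ℚ) else 0))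
      = ∑ i : Fin N, ∑ j : Fin N, (if j < i then (l i : ℚ) * ((j : ℕ) : ℚ) else 0) := by
    rw [Finset.sum_comm]
  rw [hswap, ← Finset.sum_add_distrib]
  simp only [← Finset.sum_add_distrib]
  have combine : ∀ i j : Fin N,
      ((if i < j then (l i : ℚ) * ((j : ℕ) : ℚ) else 0)
        + (if j < i then (l i : ℚ) * ((j : ℕ) : ℚ) else 0))
      = (l i : ℚ) * ((j : ℕ) : ℚ) - (if i = j then (l i : ℚ) * ((j : ℕ) : ℚ) else 0) := by
    intro i j
    rcases lt_trichotomy i j with h | h | h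
    · simp [h, not_lt.mpr h.le, h.ne]
    · simp [h]
    · simp [h, not_lt.mpr h.le, h.ne']
  simp only [combine, Finset.sum_sub_distrib]
  have hdiag : ∀ i : Fin N,
      (∑ j : Fin N, (if i = j then (l i : ℚ) * ((j : ℕ) : ℚ) else 0))
        = (l i : ℚ) * ((i : ℕ) : ℚ) := by
    intro i; rw [Finset.sum_ite_eq]; simp
  simp only [hdiag, ← Finset.mul_sum]
  rw [← Finset.sum_mul]
  have : (∑ i : Fin N, (l i : ℚ) * ((i : ℕ) : ℚ))
      = ∑ i : Fin N, ((i : ℕ) : ℚ) * (l i : ℚ) := by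
    exact Finset.sum_congr rfl fun i _ => mul_comm _ _
  rw [this]
  ring

/-- Abel-type rewriting of `∑ i·lᵢ` via prefix sums. -/
lemma weighted_sum_eq {N : ℕ} (l : Fin N → ℕ) :
    (∑ i : Fin N, ((i : ℕ) : ℚ) * (l i : ℚ))
      = ∑ k : Fin N, ((∑ i : Fin N, (l i : ℚ))
          - ∑ i ∈ Finset.univ.filter (· ≤ k), (l i : ℚ)) := by
  have h1 : ∀ i : Fin N, ((i : ℕ) : ℚ) * (l i : ℚ)
      = ∑ k : Fin N, (if k < i then (l i : ℚ) else 0) := by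
    intro i
    rw [← Finset.sum_filter]
    have hfil : (Finset.univ.filter (· < i)) = Finset.Iio i := by
      ext x; simp
    rw [hfil, Finset.sum_const, Fin.card_Iio]
    simp [mul_comm]
  simp only [h1]
  rw [Finset.sum_comm]
  refine Finset.sum_congr rfl fun k _ => ?_
  have h2 : ∀ i : Fin N, (if k < i then (l i : ℚ) else 0)
      = (l i : ℚ) - (if i ≤ k then (l i : ℚ) else 0) := by
    intro i
    rcases le_or_gt i k with h | h
    · simp [h, not_lt.mpr h]
    · simp [h, not_le.mpr h]
  simp only [h2, Finset.sum_sub_distrib]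
  congr 1
  rw [Finset.sum_filter]

/-- If `μ < λ` strictly in the dominance order (both partitions of `n` with at most `N` parts),
then `ε^{(2)}_λ(α)` and `ε^{(2)}_μ(α)` are distinct polynomials in `α`. -/
theorem eps2_ne_of_dominance_lt {N n : ℕ} (lam mu : Fin N → ℕ)
    (hlam : ∀ i j : Fin N, i ≤ j → lam j ≤ lam i)
    (hmu : ∀ i j : Fin N, i ≤ j → mu j ≤ mu i)
    (hlamn : ∑ i, lam i = n) (hmun : ∑ i, mu i = n)
    (hdom : ∀ k : Fin N,
      ∑ i ∈ Finset.univ.filter (· ≤ k), mu i ≤ ∑ i ∈ Finset.univ.filter (· ≤ k), lam i)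
    (hne : mu ≠ lam) :
    eps2 lam ≠ eps2 mu := by
  -- total sums in ℚ
  have hlq : (∑ i : Fin N, (lam i : ℚ)) = (n : ℚ) := by
    rw [← Nat.cast_sum, hlamn]
  have hmq : (∑ i : Fin N, (mu i : ℚ)) = (n : ℚ) := by
    rw [← Nat.cast_sum, hmun]
  -- find the least index where they differ, get a strict prefix inequality there
  have hsne : (Finset.univ.filter (fun k => mu k ≠ lam k)).Nonempty := by
    rcases Function.ne_iff.mp hne with ⟨k, hk⟩
    exact ⟨k, by simp [hk]⟩
  set s := Finset.univ.filter (fun k => mu k ≠ lam k) with hs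
  set k0 := s.min' hsne with hk0
  have hk0s : k0 ∈ s := Finset.min'_mem s hsne
  have hk0ne : mu k0 ≠ lam k0 := by
    have := hk0s; rw [hs, Finset.mem_filter] at this; exact this.2
  have hprefix_eq : ∀ i : Fin N, i < k0 → mu i = lam i := by
    intro i hi
    by_contra hcon
    have : i ∈ s := by rw [hs, Finset.mem_filter]; exact ⟨Finset.mem_univ i, hcon⟩
    exact absurd (Finset.min'_le s i this) (not_le.mpr hi)
  -- strict prefix inequality at k0
  have hstrict : ∑ i ∈ Finset.univ.filter (· ≤ k0), mu i
      < ∑ i ∈ Finset.univ.filter (· ≤ k0), lam i := by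
    refine lt_of_le_of_ne (hdom k0) ?_
    intro heq
    apply hk0ne
    have hins : Finset.univ.filter (· ≤ k0)
        = insert k0 (Finset.univ.filter (· < k0)) := by
      ext x
      simp [le_iff_lt_or_eq, or_comm]
    have hnot : k0 ∉ Finset.univ.filter (· < k0) := by simp
    rw [hins, Finset.sum_insert hnot, Finset.sum_insert hnot] at heq
    have hcong : ∑ i ∈ Finset.univ.filter (· < k0), mu i
        = ∑ i ∈ Finset.univ.filter (· < k0), lam i := by
      refine Finset.sum_congr rfl fun i hi => ?_
      exact hprefix_eq i (Finset.mem_filter.mp hi).2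
    omega
  -- hence the weighted sums differ
  have hT : (∑ i : Fin N, ((i : ℕ) : ℚ) * (lam i : ℚ))
      < (∑ i : Fin N, ((i : ℕ) : ℚ) * (mu i : ℚ)) := by
    rw [weighted_sum_eq lam, weighted_sum_eq mu, hlq, hmq]
    refine Finset.sum_lt_sum (fun k _ => ?_) ⟨k0, Finset.mem_univ k0, ?_⟩
    · have := hdom k
      have : (∑ i ∈ Finset.univ.filter (· ≤ k), (mu i : ℚ))
          ≤ ∑ i ∈ Finset.univ.filter (· ≤ k), (lam i : ℚ) := by
        rw [← Nat.cast_sum, ← Nat.cast_sum]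
        exact_mod_cast this
      linarith
    · have : (∑ i ∈ Finset.univ.filter (· ≤ k0), (mu i : ℚ))
          < ∑ i ∈ Finset.univ.filter (· ≤ k0), (lam i : ℚ) := by
        rw [← Nat.cast_sum, ← Nat.cast_sum]
        exact_mod_cast hstrict
      linarith
  intro heq
  have h1 := eps2_coeff_one lam
  have h2 := eps2_coeff_one mu
  rw [heq, h2, hlq, hmq] at h1
  rw [hlq] at *
  linarith [h1]
end

section
/- Let λ and ν be partitions (of length N, zeros allowed) such that there exist indices i < j with λ_i = ν_i + 1, λ_j = ν_j − 1, and λ_k = ν_k for all k ≠ i, j. Then the coefficient of α² in ε^{(2)}_ν(α) − ε^{(2)}_λ(α) equals 1 + ν_i − ν_j, which is strictly positive. -/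
open Polynomial Finset

lemma epsEntry_mul_coeff_two {N : ℕ} (l : Fin N → ℕ) (a b : Fin N) :
    (epsEntry l a * epsEntry l b).coeff 2 = (l a : ℚ) * (l b : ℚ) := by
  have : epsEntry l a * epsEntry l b =
      C ((l a : ℚ) * l b) * X ^ 2 - C ((l a : ℚ) * b + (l b : ℚ) * a) * X
        + C ((a : ℕ) * (b : ℕ) : ℚ) := by
    simp only [epsEntry, map_mul, map_add]; ring
  rw [this, coeff_add, coeff_sub, coeff_C_mul, coeff_C_mul, coeff_X_pow, coeff_X, coeff_C]
  norm_num

lemma two_mul_pair_sum {N : ℕ} (f : Fin N → ℚ) :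
    2 * (∑ a : Fin N, ∑ b : Fin N, if a < b then f a * f b else 0) =
      (∑ a : Fin N, f a) ^ 2 - ∑ a : Fin N, (f a) ^ 2 := by
  have h : (∑ a : Fin N, f a) ^ 2 = ∑ a : Fin N, ∑ b : Fin N, f a * f b := by
    rw [sq, Finset.sum_mul_sum]
  have hsplit : ∀ a b : Fin N, f a * f b =
      (if a < b then f a * f b else 0) + (if b < a then f a * f b else 0) +
        (if a = b then f a * f b else 0) := by
    intro a b
    rcases lt_trichotomy a b with h | h | h
    · simp [h, asymm h, ne_of_lt h]
    · simp [h, lt_irrefl]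
    · simp [h, asymm h, (ne_of_lt h).symm]
  have h2 : ∑ a : Fin N, ∑ b : Fin N, f a * f b =
      (∑ a : Fin N, ∑ b : Fin N, if a < b then f a * f b else 0) +
      (∑ a : Fin N, ∑ b : Fin N, if b < a then f a * f b else 0) +
      (∑ a : Fin N, ∑ b : Fin N, if a = b then f a * f b else 0) := by
    rw [← Finset.sum_add_distrib, ← Finset.sum_add_distrib]
    refine sum_congr rfl fun a _ => ?_
    rw [← Finset.sum_add_distrib, ← Finset.sum_add_distrib]
    exact sum_congr rfl fun b _ => hsplit a b
  have h3 : (∑ a : Fin N, ∑ b : Fin N, if b < a then f a * f b else 0) =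
      ∑ a : Fin N, ∑ b : Fin N, if a < b then f a * f b else 0 := by
    rw [Finset.sum_comm]
    refine sum_congr rfl fun a _ => sum_congr rfl fun b _ => ?_
    split <;> ring
  have h4 : (∑ a : Fin N, ∑ b : Fin N, if a = b then f a * f b else 0) =
      ∑ a : Fin N, (f a) ^ 2 := by
    refine sum_congr rfl fun a _ => ?_
    simp [sq]
  rw [h, h2, h3, h4]; ring

lemma eps2_coeff_two {N : ℕ} (l : Fin N → ℕ) :
    (eps2 l).coeff 2 =
      ∑ a : Fin N, ∑ b : Fin N, if a < b then (l a : ℚ) * (l b : ℚ) else 0 := by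
  rw [eps2, finset_sum_coeff]
  refine sum_congr rfl fun a _ => ?_
  rw [finset_sum_coeff]
  refine sum_congr rfl fun b _ => ?_
  split
  · exact epsEntry_mul_coeff_two l a b
  · simp

/-- If `λ` is obtained from the partition `ν` by moving a box up, i.e. `λ_i = ν_i + 1`,
`λ_j = ν_j − 1` for some `i < j` and `λ_k = ν_k` otherwise, then the coefficient of `α²` in
`ε^{(2)}_ν(α) − ε^{(2)}_λ(α)` equals `1 + ν_i − ν_j`, which is strictly positive. -/
theorem eps2_coeff_two_of_raising {N : ℕ} (lam nu : Fin N → ℕ)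
    (hlam : ∀ i j : Fin N, i ≤ j → lam j ≤ lam i)
    (hnu : ∀ i j : Fin N, i ≤ j → nu j ≤ nu i)
    (i j : Fin N) (hij : i < j)
    (hi : lam i = nu i + 1) (hj : nu j = lam j + 1)
    (hk : ∀ k : Fin N, k ≠ i → k ≠ j → lam k = nu k) :
    (eps2 nu - eps2 lam).coeff 2 = 1 + (nu i : ℚ) - (nu j : ℚ) ∧
      (0 : ℚ) < 1 + (nu i : ℚ) - (nu j : ℚ) := by
  have hne : i ≠ j := ne_of_lt hij
  have hij' : (nu j : ℚ) ≤ nu i := by exact_mod_cast hnu i j hij.le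
  have hpos : (0 : ℚ) < 1 + (nu i : ℚ) - (nu j : ℚ) := by linarith
  refine ⟨?_, hpos⟩
  have hGi : (lam i : ℚ) = (nu i : ℚ) + 1 := by rw [hi]; push_cast; ring
  have hGj : (lam j : ℚ) = (nu j : ℚ) - 1 := by
    have : (nu j : ℚ) = (lam j : ℚ) + 1 := by rw [hj]; push_cast; ring
    linarith
  have hS : ∑ a : Fin N, (lam a : ℚ) = ∑ a : Fin N, (nu a : ℚ) := by
    have hpt : ∀ a : Fin N, (lam a : ℚ) =
        (nu a : ℚ) + ((if a = i then 1 else 0) - (if a = j then 1 else 0)) := by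
      intro a
      by_cases hai : a = i
      · subst hai; simp [hne, hGi]
      · by_cases haj : a = j
        · subst haj; simp [hai, hGj]; ring
        · simp [hai, haj, hk a hai haj]
    rw [sum_congr rfl fun a _ => hpt a, Finset.sum_add_distrib, Finset.sum_sub_distrib]
    simp
  have hQ : ∑ a : Fin N, (lam a : ℚ) ^ 2 =
      (∑ a : Fin N, (nu a : ℚ) ^ 2) + (2 * (1 + (nu i : ℚ) - (nu j : ℚ))) := by
    have hpt : ∀ a : Fin N, (lam a : ℚ) ^ 2 =
        (nu a : ℚ) ^ 2 + ((if a = i then 2 * (nu i : ℚ) + 1 else 0) +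
          (if a = j then 1 - 2 * (nu j : ℚ) else 0)) := by
      intro a
      by_cases hai : a = i
      · subst hai; simp [hne, hGi]; ring
      · by_cases haj : a = j
        · subst haj; simp [hai, hGj]; ring
        · simp [hai, haj, hk a hai haj]
    rw [sum_congr rfl fun a _ => hpt a, Finset.sum_add_distrib, Finset.sum_add_distrib]
    simp; ring
  have key := two_mul_pair_sum (fun a => (nu a : ℚ))
  have key2 := two_mul_pair_sum (fun a => (lam a : ℚ))
  rw [coeff_sub, eps2_coeff_two, eps2_coeff_two]
  have : 2 * ((∑ a : Fin N, ∑ b : Fin N, if a < b then (nu a : ℚ) * (nu b : ℚ) else 0) -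
      ∑ a : Fin N, ∑ b : Fin N, if a < b then (lam a : ℚ) * (lam b : ℚ) else 0) =
      2 * (1 + (nu i : ℚ) - (nu j : ℚ)) := by
    rw [mul_sub, key, key2, hS, hQ]; ring
  linarith
end

section
/- The Dunkl operators 𝒟_i = α z_i ∂_i + Σ_{j<i} (z_i/(z_i−z_j))(1−K_{ij}) + Σ_{j>i} (z_j/(z_i−z_j))(1−K_{ij}) − (i−1), acting on polynomials in z₁,…,z_N, satisfy the degenerate Hecke relation K_{i,i+1} 𝒟_{i+1} − 𝒟_i K_{i,i+1} = −1 for all 1 ≤ i ≤ N−1. -/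
noncomputable section

open MvPolynomial

/-- The field `F(z₁,…,z_N)` of rational functions, as the fraction field of the polynomial
ring `F[z₁,…,z_N]`. -/
abbrev RatF (F : Type) [Field F] (N : ℕ) := FractionRing (MvPolynomial (Fin N) F)

/-- The canonical inclusion of polynomials into rational functions. -/
def toK {F : Type} [Field F] {N : ℕ} (p : MvPolynomial (Fin N) F) : RatF F N :=
  algebraMap _ _ p

/-- The variable `z_i` as a rational function. -/
def zK {F : Type} [Field F] {N : ℕ} (i : Fin N) : RatF F N := toK (X i)

/-- The operator `K_{ij}` exchanging the variables `z_i` and `z_j` in a rational function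
(computed on the numerator/denominator representation `x = num x / den x`). -/
def swapK {F : Type} [Field F] {N : ℕ} (i j : Fin N) (x : RatF F N) : RatF F N :=
  toK (rename (Equiv.swap i j) (IsFractionRing.num (MvPolynomial (Fin N) F) x)) /
    toK (rename (Equiv.swap i j)
      ((IsFractionRing.den (MvPolynomial (Fin N) F) x : MvPolynomial (Fin N) F)))

/-- The partial derivative `∂_i = ∂/∂z_i` on rational functions, via the quotient rule on the
numerator/denominator representation. -/
def pdK {F : Type} [Field F] {N : ℕ} (i : Fin N) (x : RatF F N) : RatF F N :=
  (toK (pderiv i (IsFractionRing.num (MvPolynomial (Fin N) F) x)) *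
      toK ((IsFractionRing.den (MvPolynomial (Fin N) F) x : MvPolynomial (Fin N) F)) -
    toK (IsFractionRing.num (MvPolynomial (Fin N) F) x) *
      toK (pderiv i ((IsFractionRing.den (MvPolynomial (Fin N) F) x : MvPolynomial (Fin N) F)))) /
    toK ((IsFractionRing.den (MvPolynomial (Fin N) F) x : MvPolynomial (Fin N) F)) ^ 2

/-- The Dunkl operator
`𝒟_i = α z_i ∂_i + Σ_{j<i} (z_i/(z_i−z_j))(1−K_{ij}) + Σ_{j>i} (z_j/(z_i−z_j))(1−K_{ij}) − (i−1)`
(with `i` 1-indexed, so the constant is `(i : ℕ)` for `i : Fin N` 0-indexed). -/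
def Dunkl {F : Type} [Field F] {N : ℕ} (α : F) (i : Fin N) (x : RatF F N) : RatF F N :=
  toK (C α) * zK i * pdK i x
    + ∑ j ∈ Finset.univ.filter (· < i), (zK i / (zK i - zK j)) * (x - swapK i j x)
    + ∑ j ∈ Finset.univ.filter (i < ·), (zK j / (zK i - zK j)) * (x - swapK i j x)
    - ((i : ℕ) : RatF F N) * x

/-!
Let `s = K_{i,i+1}`. As a field automorphism of `F(z₁,…,z_N)`, `s` conjugates `z_{i+1} ∂_{i+1}`
into `z_i ∂_i` and `K_{i+1,j}` into `K_{i,s(j)}`, so `s 𝒟_{i+1} s` agrees with `𝒟_i` term by term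
up to three discrepancies: the term `j = i` of its first sum, `z_i/(z_i−z_{i+1}) (1−s)`; the term
`j = i+1` of the second sum of `𝒟_i`, `z_{i+1}/(z_i−z_{i+1}) (1−s)`; and the constants `i`
versus `i−1`. Hence `s 𝒟_{i+1} s − 𝒟_i = (1−s) − 1 = −s`, and multiplying by `s` on the right
gives the relation.
-/

section

open Finset

variable {F : Type} [Field F] {N : ℕ}

lemma toK_injective : Function.Injective (toK : MvPolynomial (Fin N) F → RatF F N) :=
  IsFractionRing.injective _ _

lemma toK_num_div_toK_den (x : RatF F N) :
    toK (IsFractionRing.num (MvPolynomial (Fin N) F) x) /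
      toK (IsFractionRing.den (MvPolynomial (Fin N) F) x : MvPolynomial (Fin N) F) = x :=
  IsFractionRing.mk'_num_den' _ _

lemma zK_sub_zK_ne_zero {i j : Fin N} (hij : i ≠ j) : zK (F := F) i - zK j ≠ 0 :=
  sub_ne_zero.mpr fun h => hij (X_injective (toK_injective h))

def renameK (σ : Equiv.Perm (Fin N)) : RatF F N ≃+* RatF F N :=
  IsFractionRing.ringEquivOfRingEquiv (renameEquiv F σ).toRingEquiv

lemma renameK_toK (σ : Equiv.Perm (Fin N)) (p : MvPolynomial (Fin N) F) :
    renameK σ (toK p) = toK (rename σ p) :=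
  IsFractionRing.ringEquivOfRingEquiv_algebraMap _ p

lemma renameK_zK (σ : Equiv.Perm (Fin N)) (k : Fin N) :
    renameK σ (zK k) = zK (F := F) (σ k) := by
  rw [zK, renameK_toK, rename_X, zK]

lemma renameK_toK_C (σ : Equiv.Perm (Fin N)) (a : F) :
    renameK σ (toK (C a)) = toK (N := N) (C a) := by
  rw [renameK_toK, rename_C]

lemma renameK_renameK (σ τ : Equiv.Perm (Fin N)) (x : RatF F N) :
    renameK σ (renameK τ x) = renameK (σ * τ) x := by
  rw [← toK_num_div_toK_den x]
  simp only [map_div₀, renameK_toK, rename_rename, Equiv.Perm.coe_mul]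

lemma swapK_eq_renameK (i j : Fin N) (x : RatF F N) :
    swapK i j x = renameK (Equiv.swap i j) x := by
  conv_rhs => rw [← toK_num_div_toK_den x]
  rw [map_div₀, renameK_toK, renameK_toK, swapK]

lemma renameK_swapK (σ : Equiv.Perm (Fin N)) (a b : Fin N) (x : RatF F N) :
    renameK σ (swapK a b x) = swapK (σ a) (σ b) (renameK σ x) := by
  rw [swapK_eq_renameK, swapK_eq_renameK, renameK_renameK, renameK_renameK,
    Equiv.swap_apply_apply, inv_mul_cancel_right]

lemma renameK_one (x : RatF F N) : renameK 1 x = x := by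
  conv_lhs => rw [← toK_num_div_toK_den x]
  rw [map_div₀, renameK_toK, renameK_toK, Equiv.Perm.coe_one, rename_id, AlgHom.id_apply,
    AlgHom.id_apply, toK_num_div_toK_den]

lemma swapK_swapK (i j : Fin N) (x : RatF F N) : swapK i j (swapK i j x) = x := by
  rw [swapK_eq_renameK, swapK_eq_renameK, renameK_renameK, Equiv.swap_mul_self, renameK_one]

lemma pdK_toK_div_toK (i : Fin N) {p q : MvPolynomial (Fin N) F} (hq : q ≠ 0) :
    pdK i (toK p / toK q) =
      (toK (pderiv i p) * toK q - toK p * toK (pderiv i q)) / toK q ^ 2 := by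
  set x := toK p / toK q with hx
  set n := IsFractionRing.num (MvPolynomial (Fin N) F) x
  set d := (IsFractionRing.den (MvPolynomial (Fin N) F) x : MvPolynomial (Fin N) F)
  have hdK : toK d ≠ 0 := (map_ne_zero_iff _ toK_injective).mpr (nonZeroDivisors.coe_ne_zero _)
  have hqK : toK q ≠ 0 := (map_ne_zero_iff _ toK_injective).mpr hq
  have hcross : n * q = p * d := toK_injective <| by
    have := (toK_num_div_toK_den x).trans hx
    rw [div_eq_div_iff hdK hqK] at this
    simpa only [toK, map_mul] using this
  have hderiv := congrArg (pderiv i) hcross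
  simp only [Derivation.leibniz, smul_eq_mul] at hderiv
  have key : (pderiv i n * d - n * pderiv i d) * q ^ 2 =
      (pderiv i p * q - p * pderiv i q) * d ^ 2 := by
    linear_combination (d * q) * hderiv - (pderiv i d * q + pderiv i q * d) * hcross
  rw [pdK, div_eq_div_iff (pow_ne_zero 2 hdK) (pow_ne_zero 2 hqK)]
  simpa only [toK, map_mul, map_sub, map_pow] using congrArg toK key

lemma renameK_pdK (σ : Equiv.Perm (Fin N)) (a : Fin N) (x : RatF F N) :
    renameK σ (pdK a x) = pdK (σ a) (renameK σ x) := by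
  have hd :
      rename σ (IsFractionRing.den (MvPolynomial (Fin N) F) x : MvPolynomial (Fin N) F) ≠ 0 :=
    (map_ne_zero_iff _ (rename_injective _ σ.injective)).mpr (nonZeroDivisors.coe_ne_zero _)
  conv_rhs => rw [← toK_num_div_toK_den x, map_div₀, renameK_toK, renameK_toK,
    pdK_toK_div_toK _ hd, pderiv_rename σ.injective, pderiv_rename σ.injective]
  simp only [pdK, map_div₀, map_sub, map_mul, map_pow, renameK_toK]

lemma renameK_mul_sub_swapK (σ : Equiv.Perm (Fin N)) (a b c : Fin N) (x : RatF F N) :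
    renameK σ (zK c / (zK a - zK b) * (x - swapK a b x)) =
      zK (σ c) / (zK (σ a) - zK (σ b)) *
        (renameK σ x - swapK (σ a) (σ b) (renameK σ x)) := by
  simp only [map_mul, map_div₀, map_sub, renameK_zK, renameK_swapK]

lemma filter_lt_eq_insert_of_succ {i i' : Fin N} (h : (i' : ℕ) = i + 1) :
    univ.filter (· < i') = insert i (univ.filter (· < i)) := by
  ext j
  simp only [mem_filter, mem_insert, mem_univ, true_and, Fin.lt_def, Fin.ext_iff, h]
  omega

lemma filter_gt_eq_insert_of_succ {i i' : Fin N} (h : (i' : ℕ) = i + 1) :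
    univ.filter (i < ·) = insert i' (univ.filter (i' < ·)) := by
  ext j
  simp only [mem_filter, mem_insert, mem_univ, true_and, Fin.lt_def, Fin.ext_iff, h]
  omega

lemma swapK_Dunkl_succ (α : F) {i i' : Fin N} (h : (i' : ℕ) = i + 1) (x : RatF F N) :
    swapK i i' (Dunkl α i' x) =
      toK (C α) * zK i * pdK i (swapK i i' x)
        + (zK i / (zK i - zK i') * (swapK i i' x - x)
          + ∑ j ∈ univ.filter (· < i),
              zK i / (zK i - zK j) * (swapK i i' x - swapK i j (swapK i i' x)))
        + ∑ j ∈ univ.filter (i' < ·),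
            zK j / (zK i - zK j) * (swapK i i' x - swapK i j (swapK i i' x))
        - (((i : ℕ) : RatF F N) + 1) * swapK i i' x := by
  have hlt : i < i' := Fin.lt_def.mpr (by omega)
  have fix_lt : ∀ j ∈ univ.filter (· < i), Equiv.swap i i' j = j := fun j hj =>
    have hj : j < i := (mem_filter.mp hj).2
    Equiv.swap_apply_of_ne_of_ne hj.ne (hj.trans hlt).ne
  have fix_gt : ∀ j ∈ univ.filter (i' < ·), Equiv.swap i i' j = j := fun j hj =>
    have hj : i' < j := (mem_filter.mp hj).2
    Equiv.swap_apply_of_ne_of_ne (hlt.trans hj).ne' hj.ne'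
  rw [swapK_eq_renameK, Dunkl, filter_lt_eq_insert_of_succ h, sum_insert (by simp)]
  simp only [map_sub, map_add, map_sum, renameK_mul_sub_swapK]
  -- `+contextual` lets the membership hypotheses supplied by `Finset.sum_congr` discharge `fix_lt`
  -- and `fix_gt` inside the sums.
  simp +contextual only [map_mul, renameK_toK_C, renameK_zK, renameK_pdK, map_natCast, h,
    Equiv.swap_apply_left, Equiv.swap_apply_right, fix_lt, fix_gt, ← swapK_eq_renameK,
    swapK_swapK]
  push_cast
  ring

end

/-- The degenerate Hecke relation `K_{i,i+1} 𝒟_{i+1} − 𝒟_i K_{i,i+1} = −1`. -/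
theorem dunkl_hecke_relation {F : Type} [Field F] {N : ℕ} (α : F)
    (i i' : Fin N) (h : (i' : ℕ) = (i : ℕ) + 1) (x : RatF F N) :
    swapK i i' (Dunkl α i' x) - Dunkl α i (swapK i i' x) = -x := by
  have hii' : i ≠ i' := by rw [Ne, Fin.ext_iff]; omega
  have key : zK i / (zK i - zK i') * (swapK i i' x - x)
      - zK i' / (zK i - zK i') * (swapK i i' x - x) = swapK i i' x - x := by
    rw [← sub_mul, ← sub_div, div_self (zK_sub_zK_ne_zero hii'), one_mul]
  rw [swapK_Dunkl_succ α h, Dunkl, filter_gt_eq_insert_of_succ h, Finset.sum_insert (by simp),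
    swapK_swapK]
  linear_combination key
end
end

section
/- Assume the degenerate Hecke relations for operators 𝒟₁,…,𝒟_N and transpositions K_{i,i+1}. Then for any constant c, the symmetric polynomial S(u) = Π_{i=1}^N (𝒟_i + u) commutes with every K_{i,i+1}, i.e., K_{i,i+1} Π_{j=1}^N (𝒟_j + u) = Π_{j=1}^N (𝒟_j + u) K_{i,i+1} for all 1 ≤ i ≤ N−1. -/
open Polynomial

/-!
Conjugating the degenerate Hecke relation `K Dᵢ₊₁ - Dᵢ K = -1` by the involution `K` gives
`K Dᵢ = Dᵢ₊₁ K + 1`, so `K` commutes with the elementary symmetric functions `Dᵢ + Dᵢ₊₁` and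
`Dᵢ Dᵢ₊₁` of the pair it swaps, hence with `(Dᵢ + u)(Dᵢ₊₁ + u)`. It commutes with every other
factor `Dⱼ + u` outright, so it commutes with the whole product.
-/

section Hecke

variable {R : Type*} [Ring R] {k a b : R}

theorem mul_eq_mul_add_one_of_hecke (hk : k * k = 1) (h : k * b - a * k = -1) :
    k * a = b * k + 1 := by
  have hak : a * k = k * b + 1 := by rw [sub_eq_iff_eq_add.mp h]; abel
  calc k * a = k * (a * k) * k := by rw [mul_assoc, mul_assoc, hk, mul_one]
    _ = (k * k) * b * k + k * k := by rw [hak]; noncomm_ring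
    _ = b * k + 1 := by rw [hk, one_mul]

theorem commute_add_of_hecke (hk : k * k = 1) (h : k * b - a * k = -1) : Commute k (a + b) := by
  have hkb : k * b = a * k - 1 := by rw [sub_eq_iff_eq_add.mp h]; abel
  rw [Commute, SemiconjBy, mul_add, add_mul, mul_eq_mul_add_one_of_hecke hk h, hkb]
  abel

theorem commute_mul_of_hecke (hk : k * k = 1) (h : k * b - a * k = -1) (hab : Commute a b) :
    Commute k (a * b) := by
  have hkb : k * b = a * k - 1 := by rw [sub_eq_iff_eq_add.mp h]; abel
  calc k * (a * b) = (b * k + 1) * b := by rw [← mul_assoc, mul_eq_mul_add_one_of_hecke hk h]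
    _ = b * (k * b) + b := by noncomm_ring
    _ = b * a * k := by rw [hkb]; noncomm_ring
    _ = a * b * k := by rw [hab.eq]

end Hecke

section Polynomial

variable {R : Type*}

theorem commute_C_C_add_X [Semiring R] {k a : R} (h : Commute k a) :
    Commute (C k) (C a + X) :=
  (h.map C).add_right (commute_X _).symm

theorem C_add_X_mul_C_add_X [Ring R] (a b : R) :
    (C a + X) * (C b + X) = C (a * b) + C (a + b) * X + X ^ 2 := by
  rw [C_mul, C_add]
  have hX : (X : R[X]) * C b = C b * X := (commute_X _).eq
  noncomm_ring
  rw [hX]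
  abel

theorem commute_C_C_add_X_mul_C_add_X_of_hecke [Ring R] {k a b : R} (hk : k * k = 1)
    (h : k * b - a * k = -1) (hab : Commute a b) :
    Commute (C k) ((C a + X) * (C b + X)) := by
  rw [C_add_X_mul_C_add_X]
  exact (((commute_mul_of_hecke hk h hab).map C).add_right
    (((commute_add_of_hecke hk h).map C).mul_right (commute_X _).symm)).add_right
    ((commute_X _).symm.pow_right 2)

end Polynomial

theorem Commute.list_prod_map_range_of_commute_pair {M : Type*} [Monoid M] {x : M} {f : ℕ → M}
    {i N : ℕ} (hi : i + 1 < N) (hf : ∀ j < N, j ≠ i → j ≠ i + 1 → Commute x (f j))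
    (hpair : Commute x (f i * f (i + 1))) : Commute x ((List.range N).map f).prod := by
  obtain ⟨m, rfl⟩ : ∃ m, N = i + 2 + m := ⟨N - (i + 2), by omega⟩
  induction m with
  | zero =>
    rw [List.prod_range_succ, List.prod_range_succ, mul_assoc]
    refine (Commute.list_prod_right _ _ ?_).mul_right hpair
    simp only [List.mem_map, List.mem_range]
    rintro _ ⟨j, hj, rfl⟩
    exact hf j (by omega) (by omega) (by omega)
  | succ m ih =>
    rw [← add_assoc, List.prod_range_succ]
    exact (ih (by omega) fun j hj => hf j (by omega)).mul_right
      (hf _ (by omega) (by omega) (by omega))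

/-- Abstract Sekiguchi commutation: if operators `D 0, …, D (N−1)` and involutions
`K i` (representing `K_{i,i+1}`) satisfy the degenerate Hecke relations and the `D i` mutually
commute, then `S(u) = Π_{j=1}^N (D_j + u)`, viewed as a polynomial in the central variable `u`,
commutes with every `K i`. -/
theorem sekiguchi_commutes_with_transpositions
    (A : Type) [Ring A] (N : ℕ) (D K : ℕ → A)
    (hKK : ∀ i, i + 1 < N → K i * K i = 1)
    (hHecke : ∀ i, i + 1 < N → K i * D (i + 1) - D i * K i = -1)
    (hKD : ∀ i j, j + 1 < N → i ≠ j → i ≠ j + 1 → K j * D i = D i * K j)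
    (hDD : ∀ i j, D i * D j = D j * D i)
    (i : ℕ) (hi : i + 1 < N) :
    Polynomial.C (K i) * ((List.range N).map (fun j => Polynomial.C (D j) + Polynomial.X)).prod
      = ((List.range N).map (fun j => Polynomial.C (D j) + Polynomial.X)).prod
          * Polynomial.C (K i) :=
  (Commute.list_prod_map_range_of_commute_pair hi
    (fun j _ hji hji' => commute_C_C_add_X (hKD j i hi hji hji'))
    (commute_C_C_add_X_mul_C_add_X_of_hecke (hKK i hi) (hHecke i hi) (hDD i (i + 1)))).eq
end

section
/- Let η ∈ ℤ_{≥0}^N be a weak composition and define η̂_i = α η_i − (#{j < i : η_j ≥ η_i} + #{j > i : η_j > η_i}). Let η⁺ be the partition rearrangement of η. Then for each i there is an index j_i ∈ {1,…,N} such that η̂_i = α η⁺_{j_i} + 1 − j_i, and the map i ↦ j_i is a bijection of {1,…,N}. Consequently Π_{i=1}^N (η̂_i + u) = Π_{j=1}^N (α η⁺_j + 1 − j + u). -/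
open Finset Polynomial

lemma lowerSet_mem {N : ℕ} (S : Finset (Fin N))
    (hS : ∀ j k : Fin N, k ≤ j → j ∈ S → k ∈ S) (j : Fin N) :
    j ∈ S ↔ (j : ℕ) < S.card := by
  constructor
  · intro hj
    have h1 : Finset.Iic j ⊆ S := fun k hk => hS j k (by simpa using hk) hj
    have := Finset.card_le_card h1
    rw [Fin.card_Iic] at this
    omega
  · intro h
    by_contra hj
    have h1 : S ⊆ Finset.Iio j := by
      intro k hk
      simp only [Finset.mem_Iio]
      by_contra hk'
      exact hj (hS k j (le_of_not_gt hk') hk)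
    have := Finset.card_le_card h1
    rw [Fin.card_Iio] at this
    omega

lemma card_filter_perm {N : ℕ} (σ : Equiv.Perm (Fin N)) (p : Fin N → Prop) [DecidablePred p] :
    (univ.filter fun j => p (σ j)).card = (univ.filter p).card := by
  have : (univ.filter p).map σ.symm.toEmbedding = univ.filter fun j => p (σ j) := by
    ext j
    simp only [Finset.mem_map, Finset.mem_filter, Finset.mem_univ, true_and,
      Equiv.coe_toEmbedding]
    constructor
    · rintro ⟨k, hk, rfl⟩; simpa using hk
    · intro h; exact ⟨σ j, h, by simp⟩
  rw [← this, Finset.card_map]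

/-- The Dunkl/Cherednik eigenvalue `η̂_i = αη_i − (#{j<i : η_j ≥ η_i} + #{j>i : η_j > η_i})`. -/
def hatEig {N : ℕ} (R : Type) [CommRing R] (α : R) (η : Fin N → ℕ) (i : Fin N) : R :=
  α * (η i : R) -
    (((Finset.univ.filter fun j : Fin N => j < i ∧ η i ≤ η j).card
      + (Finset.univ.filter fun j : Fin N => i < j ∧ η i < η j).card : ℕ) : R)

/-- For a weak composition `η` with partition rearrangement `lam = η⁺` (weakly decreasing,
`η = lam ∘ σ`), there is a bijection `i ↦ τ(i)` of `{1,…,N}` with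
`η̂_i = α·lam_{τ(i)} + 1 − (τ(i)+1) = α·lam_{τ(i)} − τ(i)` (0-indexed); consequently
`Π_i (η̂_i + u) = Π_j (α·(η⁺)_j + 1 − j + u)` as polynomials in `u`. -/
theorem hatEig_rearrangement {N : ℕ} (R : Type) [CommRing R] (α : R)
    (η lam : Fin N → ℕ)
    (hlam : ∀ i j : Fin N, i ≤ j → lam j ≤ lam i)
    (σ : Equiv.Perm (Fin N)) (hσ : ∀ i, η i = lam (σ i)) :
    ∃ τ : Equiv.Perm (Fin N),
      (∀ i : Fin N, hatEig R α η i = α * (lam (τ i) : R) - ((τ i : ℕ) : R)) ∧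
      ∏ i : Fin N, (C (hatEig R α η i) + X)
        = ∏ j : Fin N, (C (α * (lam j : R) - ((j : ℕ) : R)) + X) := by
  classical
  set A : ℕ → ℕ := fun v => (univ.filter fun j => v < η j).card with hA
  set E : ℕ → ℕ := fun v => (univ.filter fun j => η j = v).card with hE
  set B : Fin N → ℕ := fun i => (univ.filter fun j => j < i ∧ η j = η i).card with hB
  set c : Fin N → ℕ := fun i =>
      (univ.filter fun j : Fin N => j < i ∧ η i ≤ η j).card
      + (univ.filter fun j : Fin N => i < j ∧ η i < η j).card with hcdef
  -- c i = A (η i) + B i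
  have hc : ∀ i, c i = A (η i) + B i := by
    intro i
    have h1 : (univ.filter fun j : Fin N => j < i ∧ η i ≤ η j)
        = (univ.filter fun j : Fin N => j < i ∧ η i < η j)
          ∪ (univ.filter fun j : Fin N => j < i ∧ η j = η i) := by
      ext j
      simp only [mem_filter, mem_union, mem_univ, true_and]
      constructor
      · rintro ⟨h, h'⟩
        rcases h'.lt_or_eq with h'' | h''
        · exact Or.inl ⟨h, h''⟩
        · exact Or.inr ⟨h, h''.symm⟩
      · rintro (⟨h, h'⟩ | ⟨h, h'⟩)
        · exact ⟨h, le_of_lt h'⟩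
        · exact ⟨h, le_of_eq h'.symm⟩
    have hd1 : Disjoint (univ.filter fun j : Fin N => j < i ∧ η i < η j)
        (univ.filter fun j : Fin N => j < i ∧ η j = η i) := by
      rw [Finset.disjoint_left]
      intro j hj hj'
      simp only [mem_filter] at hj hj'
      omega
    have h2 : (univ.filter fun j : Fin N => η i < η j)
        = (univ.filter fun j : Fin N => j < i ∧ η i < η j)
          ∪ (univ.filter fun j : Fin N => i < j ∧ η i < η j) := by
      ext j
      simp only [mem_filter, mem_union, mem_univ, true_and]
      constructor
      · intro h
        rcases lt_trichotomy j i with h' | h' | h'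
        · exact Or.inl ⟨h', h⟩
        · subst h'; omega
        · exact Or.inr ⟨h', h⟩
      · rintro (⟨_, h⟩ | ⟨_, h⟩) <;> exact h
    have hd2 : Disjoint (univ.filter fun j : Fin N => j < i ∧ η i < η j)
        (univ.filter fun j : Fin N => i < j ∧ η i < η j) := by
      rw [Finset.disjoint_left]
      intro j hj hj'
      simp only [mem_filter] at hj hj'
      exact absurd hj'.2.1 (not_lt_of_gt hj.2.1)
    have e1 := Finset.card_union_of_disjoint hd1
    have e2 := Finset.card_union_of_disjoint hd2
    rw [← h1] at e1
    rw [← h2] at e2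
    simp only [hcdef, hA, hB]
    omega
  -- transfer to lam
  have hA' : ∀ v, A v = (univ.filter fun j => v < lam j).card := by
    intro v
    have : (univ.filter fun j => v < η j) = univ.filter fun j => v < lam (σ j) := by
      apply Finset.filter_congr; intro j _; rw [hσ]
    rw [hA]; simp only [this]
    exact card_filter_perm σ (fun j => v < lam j)
  have hE' : ∀ v, E v = (univ.filter fun j => lam j = v).card := by
    intro v
    have : (univ.filter fun j => η j = v) = univ.filter fun j => lam (σ j) = v := by
      apply Finset.filter_congr; intro j _; rw [hσ]
    rw [hE]; simp only [this]
    exact card_filter_perm σ (fun j => lam j = v)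
  have hT : ∀ v, (univ.filter fun j => v ≤ lam j).card = A v + E v := by
    intro v
    have h1 : (univ.filter fun j : Fin N => v ≤ lam j)
        = (univ.filter fun j : Fin N => v < lam j) ∪ (univ.filter fun j : Fin N => lam j = v) := by
      ext j
      simp only [mem_filter, mem_union, mem_univ, true_and]
      omega
    have hd : Disjoint (univ.filter fun j : Fin N => v < lam j)
        (univ.filter fun j : Fin N => lam j = v) := by
      rw [Finset.disjoint_left]
      intro j hj hj'
      simp only [mem_filter] at hj hj'
      omega
    rw [h1, Finset.card_union_of_disjoint hd, hA' v, hE' v]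
  -- B i < E (η i)
  have hBE : ∀ i, B i < E (η i) := by
    intro i
    apply Finset.card_lt_card
    rw [Finset.ssubset_iff_of_subset]
    · exact ⟨i, by simp, by simp⟩
    · intro j hj
      simp only [mem_filter] at hj ⊢
      exact ⟨mem_univ j, hj.2.2⟩
  -- c i < N
  have hcN : ∀ i, c i < N := by
    intro i
    have h1 : (univ.filter fun j : Fin N => η i ≤ lam j).card ≤ N := by
      calc (univ.filter fun j : Fin N => η i ≤ lam j).card
          ≤ (univ : Finset (Fin N)).card := Finset.card_le_univ _
        _ = N := by simp
    have := hT (η i)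
    have := hBE i
    have := hc i
    omega
  set f : Fin N → Fin N := fun i => ⟨c i, hcN i⟩ with hf
  -- lam (f i) = η i
  have hf_lam : ∀ i, lam (f i) = η i := by
    intro i
    have hT_lower : ∀ j k : Fin N, k ≤ j →
        j ∈ (univ.filter fun j : Fin N => η i ≤ lam j) →
        k ∈ (univ.filter fun j : Fin N => η i ≤ lam j) := by
      intro j k hkj hj
      simp only [mem_filter, mem_univ, true_and] at hj ⊢
      exact le_trans hj (hlam k j hkj)
    have hS_lower : ∀ j k : Fin N, k ≤ j →
        j ∈ (univ.filter fun j : Fin N => η i < lam j) →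
        k ∈ (univ.filter fun j : Fin N => η i < lam j) := by
      intro j k hkj hj
      simp only [mem_filter, mem_univ, true_and] at hj ⊢
      exact lt_of_lt_of_le hj (hlam k j hkj)
    have hmemT : f i ∈ (univ.filter fun j : Fin N => η i ≤ lam j) := by
      rw [lowerSet_mem _ hT_lower, hT (η i)]
      show c i < A (η i) + E (η i)
      have := hc i; have := hBE i; omega
    have hnotS : f i ∉ (univ.filter fun j : Fin N => η i < lam j) := by
      rw [lowerSet_mem _ hS_lower, ← hA' (η i)]
      show ¬ c i < A (η i)
      have := hc i; omega
    simp only [mem_filter, mem_univ, true_and] at hmemT hnotS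
    omega
  -- B is strictly monotone on equal values
  have hBmono : ∀ i i' : Fin N, i < i' → η i = η i' → B i < B i' := by
    intro i i' hii hval
    apply Finset.card_lt_card
    rw [Finset.ssubset_iff_of_subset]
    · exact ⟨i, by simp only [mem_filter, mem_univ, true_and]; exact ⟨hii, hval⟩,
        by simp only [mem_filter, mem_univ, true_and, not_and]; intro h; exact absurd h (lt_irrefl i)⟩
    · intro j hj
      simp only [mem_filter, mem_univ, true_and] at hj ⊢
      exact ⟨lt_trans hj.1 hii, by omega⟩
  -- injectivity
  have hinj : Function.Injective f := by
    intro i i' h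
    have hcc : c i = c i' := congrArg Fin.val h
    have hval : η i = η i' := by rw [← hf_lam i, ← hf_lam i', h]
    have hBB : B i = B i' := by have := hc i; have := hc i'; rw [hval] at *; omega
    by_contra hne
    rcases lt_or_gt_of_ne hne with h' | h'
    · exact absurd hBB (ne_of_lt (hBmono i i' h' hval))
    · exact absurd hBB.symm (ne_of_lt (hBmono i' i h' hval.symm))
  set τ : Equiv.Perm (Fin N) := Equiv.ofBijective f (Finite.injective_iff_bijective.mp hinj) with hτ
  have hτapp : ∀ i, τ i = f i := fun i => rfl
  have key : ∀ i : Fin N, hatEig R α η i = α * (lam (τ i) : R) - ((τ i : ℕ) : R) := by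
    intro i
    rw [hτapp, hf_lam i]
    show α * (η i : R) - _ = α * (η i : R) - ((c i : ℕ) : R)
    rfl
  refine ⟨τ, key, ?_⟩
  calc ∏ i : Fin N, (C (hatEig R α η i) + X)
      = ∏ i : Fin N, (C (α * (lam (τ i) : R) - ((τ i : ℕ) : R)) + X) := by
        exact Finset.prod_congr rfl fun i _ => by rw [key i]
    _ = ∏ j : Fin N, (C (α * (lam j : R) - ((j : ℕ) : R)) + X) :=
        Equiv.prod_comp τ (fun j => C (α * (lam j : R) - ((j : ℕ) : R)) + X)
end

section
/- Let Λ be an ℕ=2 superpartition in fermionic sector M = (m̄, m̃, m̂), written as a quadruple (Λ̄̂; Λ̃; Λ̂; Λˢ) where Λ̄̂ is a partition with zeros allowed of length m̄, Λ̃ and Λ̂ are strictly decreasing sequences of nonnegative integers of lengths m̃ and m̂, and Λˢ is a partition. Define Λ^[0] as the weakly decreasing rearrangement of all entries, and Λ^[k] = (Λ + 1^{M_k})⁺ for k = 1,2,3, where M₁ = m̄, M₂ = m̄+m̃, M₃ = m̄+m̃+m̂, and Λ+1^{M_k} adds 1 to the first M_k entries of Λ viewed as a composition. Then the map Λ ↦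 (Λ^[0], Λ^[1], Λ^[2], Λ^[3]) is injective on the set of superpartitions. -/
open Finset

/-- Add `1` to the first `m` entries of a composition. -/
def addOne (m : ℕ) {N : ℕ} (L : Fin N → ℕ) : Fin N → ℕ :=
  fun i => L i + if (i : ℕ) < m then 1 else 0

/-- The weakly decreasing (partition) rearrangement `L⁺` of a composition `L`. -/
def sortedDesc {N : ℕ} (L : Fin N → ℕ) : Fin N → ℕ :=
  fun i => (L ∘ Tuple.sort L) i.rev

/-- Dominance order: every partial sum of the decreasing rearrangement of `f` is at most the
corresponding partial sum for `g`. -/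
def domLe {N : ℕ} (f g : Fin N → ℕ) : Prop :=
  ∀ k : Fin N,
    ∑ i ∈ Finset.univ.filter (· ≤ k), sortedDesc f i ≤
      ∑ i ∈ Finset.univ.filter (· ≤ k), sortedDesc g i

/-- An `ℕ=2` superpartition of sector `M = (M₁, M₂−M₁, M₃−M₂)`: a composition of length `N`
whose first block (positions `< M₁`) is weakly decreasing (zeros allowed), whose second and
third blocks (positions in `[M₁,M₂)` and `[M₂,M₃)`) are strictly decreasing, and whose fourth
block is weakly decreasing. -/
def IsSuperPartition (M1 M2 M3 : ℕ) {N : ℕ} (L : Fin N → ℕ) : Prop :=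
  (∀ i j : Fin N, (j : ℕ) < M1 → i ≤ j → L j ≤ L i) ∧
  (∀ i j : Fin N, M1 ≤ (i : ℕ) → (j : ℕ) < M2 → i < j → L j < L i) ∧
  (∀ i j : Fin N, M2 ≤ (i : ℕ) → (j : ℕ) < M3 → i < j → L j < L i) ∧
  (∀ i j : Fin N, M3 ≤ (i : ℕ) → i ≤ j → L j ≤ L i)

/-- The dominance order on superpartitions: `O ≤ L` iff `O^[k] ≤ L^[k]` in the dominance order
on partitions for `k = 0,1,2,3`, where `Λ^[k] = (Λ + 1^{M_k})⁺` and `M₀ = 0`. -/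
def superLe (M1 M2 M3 : ℕ) {N : ℕ} (O L : Fin N → ℕ) : Prop :=
  ∀ k : Fin 4, domLe (addOne (![0, M1, M2, M3] k) O) (addOne (![0, M1, M2, M3] k) L)

/-!
For a composition `Λ = P ++ S` with prefix `P` of length `m`, the multisets of entries of `Λ` and
of `Λ + 1^{m} = (P + 1) ++ S` determine the multiset of `P`: comparing multiplicities of `t + 1`
shows that `count t P - count (t + 1) P` is an invariant, so the difference of the multiplicities
of `t` in the prefixes of two such compositions is independent of `t`, hence zero. Thus
`Λ^[0], …, Λ^[3]` fix the multiset of each of the four blocks, and a weakly decreasing block is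
determined by its multiset.
-/
namespace List

theorem Perm.of_append_of_map_succ_append {P P' S S' : List ℕ} (h : P ++ S ~ P' ++ S')
    (hsucc : P.map (· + 1) ++ S ~ P'.map (· + 1) ++ S') : P ~ P' := by
  have hstep : ∀ t, P.count t + P'.count (t + 1) = P'.count t + P.count (t + 1) := by
    intro t
    have h₁ := perm_iff_count.mp h (t + 1)
    have h₂ := perm_iff_count.mp hsucc (t + 1)
    simp only [count_append, count_map_of_injective _ _ (add_left_injective 1)] at h₁ h₂
    omega
  have hshift : ∀ t n, P.count t + P'.count (t + n) = P'.count t + P.count (t + n) := by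
    intro t n
    induction n with
    | zero => rw [add_zero, add_comm]
    | succ n ih => have := hstep (t + n); rw [← add_assoc]; omega
  refine perm_iff_count.mpr fun t => ?_
  set n := (P ++ P').sum + 1
  have hvanish : ∀ l : List ℕ, l.sum ≤ (P ++ P').sum → l.count (t + n) = 0 := fun l hl =>
    count_eq_zero_of_not_mem fun hmem => by have := le_sum_of_mem hmem; omega
  have := hshift t n
  rw [hvanish P (by simp), hvanish P' (by simp)] at this
  omega

theorem take_eq_take_of_perm_of_pairwise {α : Type*} {r : α → α → Prop} [Std.Antisymm r]
    {l l' : List α} {a b : ℕ} (ha : l.take a = l'.take a) (hb : l.take b ~ l'.take b)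
    (hs : ((l.take b).drop a).Pairwise r) (hs' : ((l'.take b).drop a).Pairwise r) :
    l.take b = l'.take b := by
  have hpre : (l.take b).take a = (l'.take b).take a := by
    rw [take_take, take_take, min_comm, ← take_take, ha, take_take]
  rw [← take_append_drop a (l.take b), ← take_append_drop a (l'.take b), hpre] at hb ⊢
  rw [((perm_append_left_iff _).mp hb).eq_of_pairwise' hs hs']

theorem pairwise_drop_take_ofFn {α : Type*} {r : α → α → Prop} {N a b : ℕ} {L : Fin N → α}
    (h : ∀ i j : Fin N, a ≤ (i : ℕ) → (j : ℕ) < b → i < j → r (L i) (L j)) :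
    (((ofFn L).take b).drop a).Pairwise r := by
  rw [pairwise_iff_getElem]
  intro i j hi hj hij
  simp only [length_drop, length_take, length_ofFn] at hi hj
  simp only [getElem_drop, getElem_take, List.getElem_ofFn]
  exact h ⟨a + i, by omega⟩ ⟨a + j, by omega⟩ (Nat.le_add_right a i) (show a + j < b by omega)
    (by simpa using hij)

end List

open List

theorem ofFn_addOne (m : ℕ) {N : ℕ} (L : Fin N → ℕ) :
    ofFn (addOne m L) = ((ofFn L).take m).map (· + 1) ++ (ofFn L).drop m := by
  refine ext_getElem ?_ fun i h₁ h₂ => ?_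
  · simp only [length_ofFn, length_append, length_map, length_take, length_drop]
    omega
  simp only [getElem_append, length_map, length_take, length_ofFn]
  rw [length_ofFn] at h₁
  split_ifs with hi
  · simp [addOne, show i < m by omega]
  · have hidx : m + (i - min m N) = i := by omega
    simp [addOne, show ¬i < m by omega, hidx]

theorem ofFn_addOne_perm_of_exists_perm {N m : ℕ} {L O : Fin N → ℕ}
    (h : ∃ σ : Equiv.Perm (Fin N), ∀ i, addOne m L (σ i) = addOne m O i) :
    ofFn (addOne m L) ~ ofFn (addOne m O) := by
  obtain ⟨σ, hσ⟩ := h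
  have hcomp : addOne m L ∘ σ = addOne m O := funext hσ
  exact hcomp ▸ (σ.ofFn_comp_perm (addOne m L)).symm

theorem take_ofFn_perm_of_addOne_perm {N m : ℕ} {L O : Fin N → ℕ} (h : ofFn L ~ ofFn O)
    (hm : ofFn (addOne m L) ~ ofFn (addOne m O)) : (ofFn L).take m ~ (ofFn O).take m := by
  rw [ofFn_addOne, ofFn_addOne] at hm
  exact Perm.of_append_of_map_succ_append (by simpa only [take_append_drop]) hm

theorem IsSuperPartition.pairwise_blocks {M1 M2 M3 N : ℕ} {L : Fin N → ℕ}
    (hL : IsSuperPartition M1 M2 M3 L) :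
    (((ofFn L).take M1).drop 0).Pairwise (· ≥ ·) ∧
    (((ofFn L).take M2).drop M1).Pairwise (· ≥ ·) ∧
    (((ofFn L).take M3).drop M2).Pairwise (· ≥ ·) ∧
    (((ofFn L).take N).drop M3).Pairwise (· ≥ ·) := by
  obtain ⟨h₁, h₂, h₃, h₄⟩ := hL
  exact ⟨pairwise_drop_take_ofFn fun i j _ hj hij => h₁ i j hj hij.le,
    pairwise_drop_take_ofFn fun i j hi hj hij => (h₂ i j hi hj hij).le,
    pairwise_drop_take_ofFn fun i j hi hj hij => (h₃ i j hi hj hij).le,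
    pairwise_drop_take_ofFn fun i j hi _ hij => h₄ i j hi hij.le⟩

theorem superPartition_injective_general (N M1 M2 M3 : ℕ)
    (L O : Fin N → ℕ)
    (hL : IsSuperPartition M1 M2 M3 L) (hO : IsSuperPartition M1 M2 M3 O)
    (h : ∀ k : Fin 4, ∃ σ : Equiv.Perm (Fin N),
      ∀ i, addOne (![0, M1, M2, M3] k) L (σ i) = addOne (![0, M1, M2, M3] k) O i) :
    L = O := by
  have hperm (k : Fin 4) := ofFn_addOne_perm_of_exists_perm (h k)
  have h₀ : ofFn L ~ ofFn O := by simpa [ofFn_addOne] using hperm 0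
  have htake (k : Fin 4) := take_ofFn_perm_of_addOne_perm h₀ (hperm k)
  obtain ⟨hL₁, hL₂, hL₃, hL₄⟩ := hL.pairwise_blocks
  obtain ⟨hO₁, hO₂, hO₃, hO₄⟩ := hO.pairwise_blocks
  have e₁ := take_eq_take_of_perm_of_pairwise (by simp) (htake 1) hL₁ hO₁
  have e₂ := take_eq_take_of_perm_of_pairwise e₁ (htake 2) hL₂ hO₂
  have e₃ := take_eq_take_of_perm_of_pairwise e₂ (htake 3) hL₃ hO₃
  have hfull (F : Fin N → ℕ) : (ofFn F).take N = ofFn F := take_of_length_le (length_ofFn).le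
  have e₄ := take_eq_take_of_perm_of_pairwise e₃ (by rwa [hfull, hfull]) hL₄ hO₄
  exact ofFn_injective (by rwa [hfull, hfull] at e₄)

/-- The map `Λ ↦ (Λ^[0], Λ^[1], Λ^[2], Λ^[3])` is injective on superpartitions: if for each
`k = 0,1,2,3` the compositions `L + 1^{M_k}` and `O + 1^{M_k}` are rearrangements of each other
(equivalently, `L^[k] = O^[k]`), then `L = O`. -/
theorem superPartition_injective (N M1 M2 M3 : ℕ)
    (h12 : M1 ≤ M2) (h23 : M2 ≤ M3) (h3N : M3 ≤ N)
    (L O : Fin N → ℕ)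
    (hL : IsSuperPartition M1 M2 M3 L) (hO : IsSuperPartition M1 M2 M3 O)
    (h : ∀ k : Fin 4, ∃ σ : Equiv.Perm (Fin N),
      ∀ i, addOne (![0, M1, M2, M3] k) L (σ i) = addOne (![0, M1, M2, M3] k) O i) :
    L = O :=
  superPartition_injective_general N M1 M2 M3 L O hL hO h
end
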